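/- arXiv:1101.1810 — 3 statements merged into one kernel-verified Lean document; each statement's English description precedes it below -/
import Mathlib

section
/- For all nonnegative reals x and x̃, x·(ln₊ x̃)² ≤ 4·x·(ln₊ x)² + 2·x̃·ln₊ x̃, where ln₊ y := max(ln y, 0). -/
/-- ln₊ y := max(ln y, 0) -/
noncomputable def lnPos (y : ℝ) : ℝ := max (Real.log y) 0

/-- For all nonnegative reals `x` and `x'`,
`x · (ln₊ x')² ≤ 4·x·(ln₊ x)² + 2·x'·ln₊ x'`. -/
theorem stmt0 (x x' : ℝ) (hx : 0 ≤ x) (hx' : 0 ≤ x') :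
    x * (lnPos x') ^ 2 ≤ 4 * x * (lnPos x) ^ 2 + 2 * x' * lnPos x' := by
  set a := lnPos x with ha_def
  set b := lnPos x' with hb_def
  have ha : 0 ≤ a := le_max_right _ _
  have hb : 0 ≤ b := le_max_right _ _
  rcases le_or_gt b (2 * a) with h | h
  · nlinarith [mul_nonneg hx' hb,
      mul_nonneg (mul_nonneg hx (sub_nonneg.mpr h)) (by linarith : (0:ℝ) ≤ 2 * a + b)]
  · have hb0 : 0 < b := lt_of_le_of_lt (by linarith) h
    have hlog : 0 < Real.log x' := by
      rcases lt_max_iff.mp (show (0:ℝ) < max (Real.log x') 0 from hb0) with h1 | h1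
      · exact h1
      · exact absurd h1 (lt_irrefl 0)
    have hx'1 : 1 < x' := by
      by_contra hc
      push_neg at hc
      exact absurd (Real.log_nonpos hx' hc) (not_le.mpr hlog)
    have hbeq : b = Real.log x' := by
      rw [hb_def, lnPos, max_eq_left hlog.le]
    have hx'e : x' = Real.exp b := by
      rw [hbeq, Real.exp_log (by linarith)]
    have hxle : x ≤ Real.exp (b / 2) := by
      rcases eq_or_lt_of_le hx with h0 | h0
      · rw [← h0]; exact (Real.exp_pos _).le
      · have h1 : Real.log x ≤ a := le_max_left _ _
        have h2 : Real.log x ≤ b / 2 := by linarith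
        calc x = Real.exp (Real.log x) := (Real.exp_log h0).symm
          _ ≤ Real.exp (b / 2) := Real.exp_le_exp.mpr h2
    have key : Real.exp (b / 2) * b ≤ 2 * Real.exp b := by
      have h2 : b / 2 ≤ Real.exp (b / 2) := by linarith [Real.add_one_le_exp (b / 2)]
      have h3 : Real.exp (b / 2) * (b / 2) ≤ Real.exp (b / 2) * Real.exp (b / 2) :=
        mul_le_mul_of_nonneg_left h2 (Real.exp_pos _).le
      have h4 : Real.exp (b / 2) * Real.exp (b / 2) = Real.exp b := by
        rw [← Real.exp_add]; ring_nf
      linarith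
    have main : x * b ^ 2 ≤ 2 * x' * b := by
      have : x * b ≤ Real.exp (b / 2) * b := mul_le_mul_of_nonneg_right hxle hb
      have h5 : x * b ≤ 2 * x' := by rw [hx'e]; linarith
      calc x * b ^ 2 = (x * b) * b := by ring
        _ ≤ (2 * x') * b := mul_le_mul_of_nonneg_right h5 hb
        _ = 2 * x' * b := rfl
    nlinarith [mul_nonneg hx (mul_nonneg ha ha)]
end

section
/- Let X and X̃ be nonnegative random variables with E[X(ln₊ X)²] < ∞ and E[X̃ ln₊ X̃] < ∞. Then E[X(ln₊ X̃)²] < ∞ and E[X̃ ln₊ X] < ∞. -/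
open MeasureTheory

lemma lnPos_nonneg (y : ℝ) : 0 ≤ lnPos y := le_max_right _ _

lemma lnPos_measurable : Measurable lnPos :=
  Real.measurable_log.max measurable_const

lemma lnPos_mono {a b : ℝ} (ha : 0 ≤ a) (hab : a ≤ b) : lnPos a ≤ lnPos b := by
  unfold lnPos
  rcases le_or_gt a 1 with h | h
  · exact max_le (le_max_of_le_right (Real.log_nonpos ha h)) (le_max_right _ _)
  · exact max_le (le_max_of_le_left (Real.log_le_log (by linarith) hab)) (le_max_right _ _)

lemma lnPos_sq (y : ℝ) : lnPos (y ^ 2) = 2 * lnPos y := by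
  unfold lnPos
  rw [Real.log_pow]
  push_cast
  rcases le_total (Real.log y) 0 with h | h
  · rw [max_eq_right h, max_eq_right (by linarith), mul_zero]
  · rw [max_eq_left h, max_eq_left (by linarith)]

lemma lnPos_sq_le (y : ℝ) (hy : 0 ≤ y) : (lnPos y) ^ 2 ≤ 16 * Real.sqrt y := by
  have key : lnPos y ≤ 4 * Real.sqrt (Real.sqrt y) := by
    rcases eq_or_lt_of_le hy with h | h
    · simp [lnPos, ← h]
    · have h1 : Real.log y = 4 * Real.log (Real.sqrt (Real.sqrt y)) := by
        rw [Real.log_sqrt (Real.sqrt_nonneg y), Real.log_sqrt hy]; ring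
      have h2 : Real.log (Real.sqrt (Real.sqrt y)) ≤ Real.sqrt (Real.sqrt y) - 1 :=
        Real.log_le_sub_one_of_pos (Real.sqrt_pos.mpr (Real.sqrt_pos.mpr h))
      have : Real.log y ≤ 4 * Real.sqrt (Real.sqrt y) := by
        rw [h1]; nlinarith [Real.sqrt_nonneg (Real.sqrt y)]
      exact max_le this (by positivity)
  calc (lnPos y) ^ 2 ≤ (4 * Real.sqrt (Real.sqrt y)) ^ 2 := by
        apply pow_le_pow_left₀ (lnPos_nonneg y) key
    _ = 16 * Real.sqrt y := by
        rw [mul_pow, Real.sq_sqrt (Real.sqrt_nonneg y)]; ring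

lemma lnPos_le_sq_add_one (y : ℝ) : lnPos y ≤ (lnPos y) ^ 2 + 1 := by
  rcases le_or_gt (lnPos y) 1 with h | h
  · nlinarith [lnPos_nonneg y]
  · nlinarith

lemma self_le_mul_lnPos_add (y : ℝ) (hy : 0 ≤ y) : y ≤ y * lnPos y + Real.exp 1 := by
  rcases le_or_gt y (Real.exp 1) with h | h
  · nlinarith [mul_nonneg hy (lnPos_nonneg y)]
  · have h1 : (1 : ℝ) ≤ Real.log y := by
      rw [show (1:ℝ) = Real.log (Real.exp 1) from (Real.log_exp 1).symm]
      exact Real.log_le_log (Real.exp_pos 1) h.le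
    have h2 : (1 : ℝ) ≤ lnPos y := le_max_of_le_left h1
    nlinarith [Real.exp_pos 1]

lemma self_le_mul_lnPos_sq_add (y : ℝ) (hy : 0 ≤ y) :
    y ≤ y * (lnPos y) ^ 2 + Real.exp 1 := by
  rcases le_or_gt y (Real.exp 1) with h | h
  · nlinarith [mul_nonneg hy (sq_nonneg (lnPos y))]
  · have h1 : (1 : ℝ) ≤ Real.log y := by
      rw [show (1:ℝ) = Real.log (Real.exp 1) from (Real.log_exp 1).symm]
      exact Real.log_le_log (Real.exp_pos 1) h.le
    have h2 : (1 : ℝ) ≤ lnPos y := le_max_of_le_left h1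
    have h3 : (1 : ℝ) ≤ (lnPos y) ^ 2 := by nlinarith
    nlinarith [Real.exp_pos 1, mul_le_mul_of_nonneg_left h3 hy]

/-- If `X`, `X'` are nonnegative random variables with `E[X (ln₊ X)²] < ∞` and
`E[X' ln₊ X'] < ∞`, then `E[X (ln₊ X')²] < ∞` and `E[X' ln₊ X] < ∞`. -/
theorem stmt2 {Ω : Type*} [MeasurableSpace Ω] (μ : Measure Ω) [IsProbabilityMeasure μ]
    (X X' : Ω → ℝ) (hX : Measurable X) (hX' : Measurable X')
    (hXpos : ∀ ω, 0 ≤ X ω) (hX'pos : ∀ ω, 0 ≤ X' ω)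
    (h1 : Integrable (fun ω => X ω * (lnPos (X ω)) ^ 2) μ)
    (h2 : Integrable (fun ω => X' ω * lnPos (X' ω)) μ) :
    Integrable (fun ω => X ω * (lnPos (X' ω)) ^ 2) μ ∧
      Integrable (fun ω => X' ω * lnPos (X ω)) μ := by
  -- Integrability of X and X'
  have hXint : Integrable X μ := by
    refine (h1.add (integrable_const (Real.exp 1))).mono' hX.aestronglyMeasurable ?_
    filter_upwards with ω
    rw [Real.norm_of_nonneg (hXpos ω)]
    exact self_le_mul_lnPos_sq_add _ (hXpos ω)
  have hX'int : Integrable X' μ := by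
    refine (h2.add (integrable_const (Real.exp 1))).mono' hX'.aestronglyMeasurable ?_
    filter_upwards with ω
    rw [Real.norm_of_nonneg (hX'pos ω)]
    exact self_le_mul_lnPos_add _ (hX'pos ω)
  constructor
  · -- X (ln₊ X')² ≤ 4 X (ln₊ X)² + 16 X'
    have hdom : Integrable (fun ω => 4 * (X ω * (lnPos (X ω)) ^ 2) + 16 * X' ω) μ :=
      (h1.const_mul 4).add (hX'int.const_mul 16)
    refine hdom.mono' ?_ ?_
    · exact (hX.mul ((lnPos_measurable.comp hX').pow_const 2)).aestronglyMeasurable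
    · filter_upwards with ω
      rw [Real.norm_of_nonneg (mul_nonneg (hXpos ω) (sq_nonneg _))]
      rcases le_or_gt (X' ω) ((X ω) ^ 2) with h | h
      · have hle : lnPos (X' ω) ≤ 2 * lnPos (X ω) := by
          rw [← lnPos_sq]; exact lnPos_mono (hX'pos ω) h
        have : (lnPos (X' ω)) ^ 2 ≤ 4 * (lnPos (X ω)) ^ 2 := by
          nlinarith [lnPos_nonneg (X' ω), lnPos_nonneg (X ω)]
        nlinarith [hXpos ω, hX'pos ω]
      · have hXle : X ω ≤ Real.sqrt (X' ω) := by
          rw [show X ω = Real.sqrt ((X ω) ^ 2) from (Real.sqrt_sq (hXpos ω)).symm]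
          exact Real.sqrt_le_sqrt h.le
        have h3 : (lnPos (X' ω)) ^ 2 ≤ 16 * Real.sqrt (X' ω) := lnPos_sq_le _ (hX'pos ω)
        have h4 : X ω * (lnPos (X' ω)) ^ 2 ≤ Real.sqrt (X' ω) * (16 * Real.sqrt (X' ω)) := by
          apply mul_le_mul hXle h3 (sq_nonneg _) (Real.sqrt_nonneg _)
        have h5 : Real.sqrt (X' ω) * Real.sqrt (X' ω) = X' ω :=
          Real.mul_self_sqrt (hX'pos ω)
        nlinarith [mul_nonneg (hXpos ω) (sq_nonneg (lnPos (X ω)))]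
  · -- X' ln₊ X ≤ X' ln₊ X' + X (ln₊ X)² + X
    have hdom : Integrable
        (fun ω => X' ω * lnPos (X' ω) + (X ω * (lnPos (X ω)) ^ 2 + X ω)) μ :=
      h2.add (h1.add hXint)
    refine hdom.mono' ?_ ?_
    · exact (hX'.mul (lnPos_measurable.comp hX)).aestronglyMeasurable
    · filter_upwards with ω
      rw [Real.norm_of_nonneg (mul_nonneg (hX'pos ω) (lnPos_nonneg _))]
      rcases le_or_gt (X ω) (X' ω) with h | h
      · have : lnPos (X ω) ≤ lnPos (X' ω) := lnPos_mono (hXpos ω) h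
        nlinarith [hX'pos ω, hXpos ω, mul_nonneg (hXpos ω) (sq_nonneg (lnPos (X ω))),
          lnPos_nonneg (X ω)]
      · have h6 : X' ω * lnPos (X ω) ≤ X ω * lnPos (X ω) :=
          mul_le_mul_of_nonneg_right h.le (lnPos_nonneg _)
        have h7 : lnPos (X ω) ≤ (lnPos (X ω)) ^ 2 + 1 := lnPos_le_sq_add_one _
        nlinarith [hXpos ω, mul_nonneg (hX'pos ω) (lnPos_nonneg (X' ω))]
end

section
/- Suppose a family of probabilities satisfies: for every ε > 0 there exist A, N such that for all n ≥ N and z ∈ [A, (3/2)ln n − A], |e^z·P(M_n^{kill} ∈ [a_n(z)−1, a_n(z))) − C₂| ≤ ε, where a_n(z) = (3/2)ln n − z and C₂ > 0, and additionally P(M_n^{kill} ≤ r) ≤ c(r)n^{-3/2} for all r ≥ 0. Then with C₁ := C₂/(1−e^{-1}), for every ε > 0 there exist A', N' such that for all n ≥ N' and z ∈ [A', (3/2)ln n − A'], |e^z·P(M_n^{kill} < (3/2)ln n − z) − C₁| ≤ ε. -/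
/-!
Cut `{M_n < a_n(z)}` into the unit intervals `[a_n(z + k) - 1, a_n(z + k))`, `k < K`, and the
remainder `{M_n < a_n(z) - K}`, with `K = ⌊a_n(z) - A⌋`. On the `k`-th interval the hypothesis at
`z + k` gives `e^z P = C₂ e^{-k} ± δ e^{-k}`, so the intervals contribute `C₂ ∑_{k<K} e^{-k}` up to
`δ / (1 - e⁻¹)`. The missing geometric tail `C₂ e^{-K} / (1 - e⁻¹)` and the remainder, which lies
in `{M_n ≤ A + 1}` and so has probability at most `c(A + 1) n^{-3/2} = c(A + 1) e^{-(3/2) ln n}`,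
are both `O(e^{z - (3/2) ln n}) = O(e^{-A'})`.
-/

open MeasureTheory Set Finset Filter

lemma abs_sum_range_sub_div_one_sub_le {r C δ : ℝ} (hr₀ : 0 ≤ r) (hr₁ : r < 1) (hδ : 0 ≤ δ)
    {u : ℕ → ℝ} {K : ℕ} (hu : ∀ k < K, |u k - C * r ^ k| ≤ δ * r ^ k) :
    |∑ k ∈ range K, u k - C / (1 - r)| ≤ (δ + |C| * r ^ K) / (1 - r) := by
  have hr : 0 < 1 - r := sub_pos.mpr hr₁
  have hgeom : ∑ k ∈ range K, r ^ k = (1 - r ^ K) / (1 - r) := by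
    rw [geom_sum_eq hr₁.ne, ← neg_sub, ← neg_sub 1 r, neg_div_neg_eq]
  have hsplit : ∑ k ∈ range K, u k - C / (1 - r) =
      ∑ k ∈ range K, (u k - C * r ^ k) - C * r ^ K / (1 - r) := by
    rw [sum_sub_distrib, ← mul_sum, hgeom]
    field_simp
    ring
  have hsum : |∑ k ∈ range K, (u k - C * r ^ k)| ≤ δ / (1 - r) :=
    calc |∑ k ∈ range K, (u k - C * r ^ k)| ≤ ∑ k ∈ range K, δ * r ^ k :=
          (abs_sum_le_sum_abs _ _).trans (sum_le_sum fun k hk => hu k (mem_range.mp hk))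
      _ = δ * ((1 - r ^ K) / (1 - r)) := by rw [← mul_sum, hgeom]
      _ ≤ δ / (1 - r) := by
          rw [mul_div_assoc']
          gcongr
          exact mul_le_of_le_one_right hδ (sub_le_self 1 (pow_nonneg hr₀ K))
  calc |∑ k ∈ range K, u k - C / (1 - r)|
      ≤ |∑ k ∈ range K, (u k - C * r ^ k)| + |C * r ^ K / (1 - r)| := hsplit ▸ abs_sub _ _
    _ ≤ δ / (1 - r) + |C| * r ^ K / (1 - r) := by
        rw [abs_div, abs_mul, abs_of_nonneg (pow_nonneg hr₀ K), abs_of_pos hr]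
        gcongr
    _ = (δ + |C| * r ^ K) / (1 - r) := by ring

section

variable {Ω : Type*} [MeasurableSpace Ω] (μ : Measure Ω) [IsFiniteMeasure μ]

lemma measureReal_preimage_Ico {α : Type*} [LinearOrder α] [MeasurableSpace α]
    [TopologicalSpace α] [OrderTopology α] [OpensMeasurableSpace α]
    {f : Ω → α} (hf : Measurable f) {a b : α} (hab : a ≤ b) :
    μ.real (f ⁻¹' Ico a b) = μ.real (f ⁻¹' Iio b) - μ.real (f ⁻¹' Iio a) := by
  rw [← measureReal_sdiff (preimage_mono (Iio_subset_Iio hab)) (hf measurableSet_Iio),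
    ← preimage_sdiff]
  congr 2
  ext x
  simp

lemma measureReal_lt_eq_sum_add {f : Ω → EReal} (hf : Measurable f) (b : ℝ) (K : ℕ) :
    μ.real {ω | f ω < (b : EReal)} =
      ∑ k ∈ range K, μ.real {ω | ((b - k - 1 : ℝ) : EReal) ≤ f ω ∧ f ω < ((b - k : ℝ) : EReal)}
        + μ.real {ω | f ω < ((b - K : ℝ) : EReal)} := by
  have hstep (k : ℕ) :
      μ.real {ω | ((b - k - 1 : ℝ) : EReal) ≤ f ω ∧ f ω < ((b - k : ℝ) : EReal)} =
        μ.real {ω | f ω < ((b - k : ℝ) : EReal)} -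
          μ.real {ω | f ω < ((b - (k + 1 : ℕ) : ℝ) : EReal)} := by
    rw [Nat.cast_succ, ← sub_sub]
    exact measureReal_preimage_Ico μ hf (EReal.coe_le_coe_iff.mpr (by linarith))
  simp_rw [hstep, sum_range_sub' (fun k : ℕ => μ.real {ω | f ω < ((b - k : ℝ) : EReal)})]
  simp

lemma abs_exp_mul_measureReal_lt_sub_le {f : Ω → EReal} (hf : Measurable f) {L z a C δ c₀ : ℝ}
    (hδ : 0 ≤ δ)
    (hint : ∀ x, z ≤ x → x ≤ L - a →
      |Real.exp x * μ.real {ω | ((L - x - 1 : ℝ) : EReal) ≤ f ω ∧ f ω < ((L - x : ℝ) : EReal)}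
        - C| ≤ δ)
    (htail : μ.real {ω | f ω ≤ ((a + 1 : ℝ) : EReal)} ≤ c₀ * Real.exp (-L)) :
    |Real.exp z * μ.real {ω | f ω < ((L - z : ℝ) : EReal)} - C / (1 - Real.exp (-1))| ≤
      (δ + |C| * Real.exp (z - L + a + 1)) / (1 - Real.exp (-1)) + c₀ * Real.exp (z - L) := by
  have hpow (k : ℕ) : Real.exp (-1) ^ k = Real.exp (-k) := by rw [← Real.exp_nat_mul]; ring_nf
  have hr₁ : Real.exp (-1) < 1 := Real.exp_lt_one_iff.mpr (by norm_num)
  set K := ⌊L - z - a⌋₊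
  rw [measureReal_lt_eq_sum_add μ hf (L - z) K, mul_add, mul_sum]
  set T := μ.real {ω | f ω < ((L - z - K : ℝ) : EReal)}
  have hblocks : ∀ k < K, |Real.exp z * μ.real {ω | ((L - z - k - 1 : ℝ) : EReal) ≤ f ω ∧
      f ω < ((L - z - k : ℝ) : EReal)} - C * Real.exp (-1) ^ k| ≤ δ * Real.exp (-1) ^ k := by
    intro k hk
    have hkK : (k : ℝ) + 1 ≤ L - z - a := mod_cast (Nat.le_floor_iff' k.succ_ne_zero).mp hk
    have h := hint (z + k) (by linarith [k.cast_nonneg (α := ℝ)]) (by linarith)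
    simp only [← sub_sub] at h
    rw [hpow, show Real.exp z = Real.exp (-k) * Real.exp (z + k) by rw [← Real.exp_add]; ring_nf,
      mul_assoc, mul_comm C, ← mul_sub, abs_mul, abs_of_pos (Real.exp_pos _), mul_comm δ]
    exact mul_le_mul_of_nonneg_left h (Real.exp_pos _).le
  have hsum := abs_sum_range_sub_div_one_sub_le (Real.exp_pos _).le hr₁ hδ hblocks
  have hK : Real.exp (-1) ^ K ≤ Real.exp (z - L + a + 1) := by
    rw [hpow, Real.exp_le_exp]
    linarith [Nat.sub_one_lt_floor (L - z - a)]
  have hT : Real.exp z * T ≤ c₀ * Real.exp (z - L) := by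
    have hsub : {ω | f ω < ((L - z - K : ℝ) : EReal)} ⊆ {ω | f ω ≤ ((a + 1 : ℝ) : EReal)} :=
      fun ω hω => hω.le.trans (EReal.coe_le_coe_iff.mpr
        (by linarith [Nat.sub_one_lt_floor (L - z - a)]))
    calc Real.exp z * T ≤ Real.exp z * (c₀ * Real.exp (-L)) :=
          mul_le_mul_of_nonneg_left ((measureReal_mono hsub).trans htail) (Real.exp_pos _).le
      _ = c₀ * Real.exp (z - L) := by rw [sub_eq_add_neg, Real.exp_add]; ring
  have hT₀ : 0 ≤ Real.exp z * T := mul_nonneg (Real.exp_pos _).le measureReal_nonneg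
  calc _ ≤ |∑ k ∈ range K, Real.exp z * μ.real {ω | ((L - z - k - 1 : ℝ) : EReal) ≤ f ω ∧
          f ω < ((L - z - k : ℝ) : EReal)} - C / (1 - Real.exp (-1))| + Real.exp z * T := by
        rw [add_sub_right_comm]
        exact (abs_add_le _ _).trans_eq (by rw [abs_of_nonneg hT₀])
    _ ≤ _ := by
        gcongr
        exact hsum.trans (by gcongr)

end

theorem stmt16_general {Ω : Type*} [MeasurableSpace Ω] (μ : Measure Ω) [IsProbabilityMeasure μ]
    (M : ℕ → Ω → EReal) (hM : ∀ n, Measurable (M n))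
    (C₂ : ℝ)
    (hinterval : ∀ ε > (0 : ℝ), ∃ A : ℝ, ∃ N : ℕ, ∀ n ≥ N,
      ∀ z : ℝ, A ≤ z → z ≤ (3 / 2) * Real.log n - A →
        |Real.exp z *
            (μ {ω | ((3 / 2) * Real.log n - z - 1 : ℝ) ≤ M n ω ∧
                    M n ω < ((3 / 2) * Real.log n - z : ℝ)}).toReal - C₂| ≤ ε)
    (c : ℝ → ℝ)
    (htail : ∀ n : ℕ, 1 ≤ n → ∀ r ≥ (0 : ℝ),
      (μ {ω | M n ω ≤ (r : ℝ)}).toReal ≤ c r * (n : ℝ) ^ (-(3 : ℝ) / 2)) :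
    ∀ ε > (0 : ℝ), ∃ A' : ℝ, ∃ N' : ℕ, ∀ n ≥ N',
      ∀ z : ℝ, A' ≤ z → z ≤ (3 / 2) * Real.log n - A' →
        |Real.exp z *
            (μ {ω | M n ω < ((3 / 2) * Real.log n - z : ℝ)}).toReal -
          C₂ / (1 - Real.exp (-1))| ≤ ε := by
  simp only [← measureReal_def] at hinterval htail ⊢
  intro ε hε
  have hD : 0 < 1 - Real.exp (-1) := sub_pos.mpr (Real.exp_lt_one_iff.mpr (by norm_num))
  obtain ⟨A, N, hAN⟩ := hinterval (ε * (1 - Real.exp (-1)) / 3) (by positivity)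
  set A₀ := max A 0
  set c₀ := max (c (A₀ + 1)) 0
  set B := |C₂| * Real.exp (A₀ + 1) / (1 - Real.exp (-1)) + c₀
  have hsmall : ∀ᶠ x in atTop, Real.exp (-x) * B < ε / 2 := by
    have h := Real.tendsto_exp_neg_atTop_nhds_zero.mul_const B
    rw [zero_mul] at h
    exact h.eventually (gt_mem_nhds (by positivity))
  obtain ⟨A', hA'₀, hA'⟩ := ((eventually_ge_atTop (A₀ + 1)).and hsmall).exists
  refine ⟨A', max N 1, fun n hN z hz₁ hz₂ => ?_⟩
  have hn : (0 : ℝ) < n := by exact_mod_cast (le_max_right N 1).trans hN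
  set L := 3 / 2 * Real.log n
  have htail' : μ.real {ω | M n ω ≤ ((A₀ + 1 : ℝ) : EReal)} ≤ c₀ * Real.exp (-L) := by
    refine (htail n ((le_max_right N 1).trans hN) (A₀ + 1) (by positivity)).trans ?_
    rw [Real.rpow_def_of_pos hn, show Real.log n * (-3 / 2) = -L by ring]
    gcongr
    exact le_max_left _ _
  refine (abs_exp_mul_measureReal_lt_sub_le μ (hM n) (by positivity)
    (fun x hx₁ hx₂ => hAN n ((le_max_left N 1).trans hN) x (by linarith [le_max_left A 0])
      (by linarith [le_max_left A 0])) htail').trans ?_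
  have hzL : Real.exp (z - L) ≤ Real.exp (-A') := Real.exp_le_exp.mpr (by linarith)
  calc _ = ε / 3 + Real.exp (z - L) * B := by
        rw [show z - L + A₀ + 1 = (z - L) + (A₀ + 1) by ring, Real.exp_add]
        generalize Real.exp (z - L) = e
        simp only [B]
        field_simp
        ring
    _ ≤ ε / 3 + Real.exp (-A') * B := by gcongr
    _ ≤ ε := by linarith

/-- From the interval asymptotics `e^z P(M_n ∈ [a_n(z)-1, a_n(z))) ≈ C₂` (uniformly for
`z ∈ [A, (3/2)ln n − A]`, `n` large), where `a_n(z) = (3/2)ln n − z`, together with the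
polynomial bound `P(M_n ≤ r) ≤ c(r) n^{-3/2}`, one deduces the tail asymptotics
`e^z P(M_n < (3/2)ln n − z) ≈ C₁ := C₂/(1−e^{-1})`, uniformly for
`z ∈ [A', (3/2)ln n − A']`, `n` large. -/
theorem stmt16 {Ω : Type*} [MeasurableSpace Ω] (μ : Measure Ω) [IsProbabilityMeasure μ]
    (M : ℕ → Ω → EReal) (hM : ∀ n, Measurable (M n))
    (C₂ : ℝ) (hC₂ : 0 < C₂)
    (hinterval : ∀ ε > (0 : ℝ), ∃ A : ℝ, ∃ N : ℕ, ∀ n ≥ N,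
      ∀ z : ℝ, A ≤ z → z ≤ (3 / 2) * Real.log n - A →
        |Real.exp z *
            (μ {ω | ((3 / 2) * Real.log n - z - 1 : ℝ) ≤ M n ω ∧
                    M n ω < ((3 / 2) * Real.log n - z : ℝ)}).toReal - C₂| ≤ ε)
    (c : ℝ → ℝ)
    (htail : ∀ n : ℕ, 1 ≤ n → ∀ r ≥ (0 : ℝ),
      (μ {ω | M n ω ≤ (r : ℝ)}).toReal ≤ c r * (n : ℝ) ^ (-(3 : ℝ) / 2)) :
    ∀ ε > (0 : ℝ), ∃ A' : ℝ, ∃ N' : ℕ, ∀ n ≥ N',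
      ∀ z : ℝ, A' ≤ z → z ≤ (3 / 2) * Real.log n - A' →
        |Real.exp z *
            (μ {ω | M n ω < ((3 / 2) * Real.log n - z : ℝ)}).toReal -
          C₂ / (1 - Real.exp (-1))| ≤ ε :=
  stmt16_general μ M hM C₂ hinterval c htail
end
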